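/- In any feasible schedule for the MAPF instance of the vertex-cover hardness reduction, a red edge of size c attached to a leaf u of the host tree (with unique tree-neighbor w) requires at least c + 1 turns to resolve all its c agents, and its agents occupy w during at least c - 1 turns, assuming these agents never leave {their leaves} ∪ {u, w}. -/

import Mathlib

/-- Vertices of the red-edge gadget: the attachment leaf `u`, its unique
tree-neighbor `w`, and the `c` leaves of the red edge. -/
inductive RedV (c : ℕ) : Type
  | u : RedV c
  | w : RedV c
  | leaf (i : Fin c) : RedV c

/-- Adjacency of the red-edge gadget: `u` is adjacent to `w` and to every leaf. -/
def RedV.adj {c : ℕ} : RedV c → RedV c → Prop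
  | .u, .w => True
  | .w, .u => True
  | .u, .leaf _ => True
  | .leaf _, .u => True
  | _, _ => False

/-!
Each agent must leave its leaf, and it can only do so through `u`, strictly between the first and
the last turn; as `u` holds one agent at a time, this takes `c` distinct turns.

For the second bound, give every agent a home leaf, kept as a permutation of `Fin c`: an agent on a
leaf is at home, and when an agent enters a leaf `l` from `u`, the agent whose home was `l` takes
over the old home of the entering agent, a transposition. If the two homes differ, then `l`
(no swaps), the old home and `w` would be three free vertices unless `w` is occupied, while `c`
agents on `c + 2` vertices leave only two free. At the end the home permutation is the `c`-cycle
`a ↦ a + 1`, and a product of transpositions that is a `c`-cycle has at least `c - 1` factors,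
since the transposed pairs must connect all of `Fin c`.
-/

open Equiv Finset

section Swaps

variable {α : Type*}

theorem SimpleGraph.reachable_swap_apply {G : SimpleGraph α} [DecidableEq α] {a b : α}
    (hab : a = b ∨ G.Adj a b) (x : α) : G.Reachable x (swap a b x) := by
  rcases hab with rfl | hab
  · rw [swap_self, refl_apply]
  rw [swap_apply_def]
  split_ifs with hxa hxb
  · exact hxa ▸ hab.reachable
  · exact hxb ▸ hab.symm.reachable
  · rfl

theorem Equiv.Perm.card_le_card_filter_ne_add_one [Fintype α] [DecidableEq α]
    {g : ℕ → Perm α} {N : ℕ} (h0 : g 0 = 1)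
    (hstep : ∀ t < N, g (t + 1) = g t ∨ ∃ a b, g (t + 1) = swap a b * g t)
    (hcycle : ∀ x y, (g N).SameCycle x y) :
    Fintype.card α ≤ #{t ∈ range N | g (t + 1) ≠ g t} + 1 := by
  rcases isEmpty_or_nonempty α with hα | hα
  · simp
  have hswap : ∀ t < N, ∃ a b, g (t + 1) = swap a b * g t := fun t ht =>
    (hstep t ht).elim (fun h => ⟨hα.some, hα.some, by rw [h, swap_self]; rfl⟩) id
  choose! a b hab using hswap
  set E := {t ∈ range N | g (t + 1) ≠ g t}.image fun t => s(a t, b t)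
  let G := SimpleGraph.fromEdgeSet (E : Set (Sym2 α))
  have hedges : Nat.card G.edgeSet ≤ #{t ∈ range N | g (t + 1) ≠ g t} := by
    rw [SimpleGraph.edgeSet_fromEdgeSet, Nat.card_coe_set_eq]
    exact (Set.ncard_le_ncard Set.sdiff_subset).trans
      ((Set.ncard_coe_finset E).trans_le card_image_le)
  have hreach : ∀ t ≤ N, ∀ x, G.Reachable x (g t x) := by
    intro t
    induction t with
    | zero => simp [h0]
    | succ t ih =>
      intro ht x
      by_cases hne : g (t + 1) = g t
      · rw [hne]; exact ih (by omega) x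
      have hadj : a t = b t ∨ G.Adj (a t) (b t) := by
        by_cases heq : a t = b t
        · exact .inl heq
        refine .inr ((SimpleGraph.fromEdgeSet_adj _).2 ⟨?_, heq⟩)
        exact mem_image_of_mem _ (mem_filter.2 ⟨mem_range.2 (by omega), hne⟩)
      rw [hab t (by omega), Perm.mul_apply]
      exact (ih (by omega) x).trans (SimpleGraph.reachable_swap_apply hadj _)
  have hpow : ∀ k : ℕ, ∀ x, G.Reachable x ((g N ^ k) x) := by
    intro k
    induction k with
    | zero => simp
    | succ k ih =>
      intro x
      rw [pow_succ', Perm.mul_apply]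
      exact (ih x).trans (hreach N le_rfl _)
  have hconn : G.Connected := by
    refine ⟨fun x y => ?_⟩
    obtain ⟨k, -, -, rfl⟩ := (hcycle x y).exists_nat_pow_eq
    exact hpow k x
  rw [← Nat.card_eq_fintype_card]
  exact hconn.card_vert_le_card_edgeSet_add_one.trans (by omega)

end Swaps

namespace RedV

variable {c : ℕ}

def equivSum : RedV c ≃ Fin c ⊕ Bool where
  toFun
    | u => .inr false
    | w => .inr true
    | leaf i => .inl i
  invFun
    | .inl i => leaf i
    | .inr false => u
    | .inr true => w
  left_inv v := by cases v <;> rfl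
  right_inv x := by rcases x with i | _ | _ <;> rfl

instance : DecidableEq (RedV c) := equivSum.decidableEq

instance : Fintype (RedV c) := Fintype.ofEquiv _ equivSum.symm

theorem card_eq : Fintype.card (RedV c) = c + 2 := by
  simp [Fintype.card_congr equivSum]

theorem card_compl_image_eq_two {p : Fin c → RedV c} (hp : Function.Injective p) :
    #(univ.image p)ᶜ = 2 := by
  rw [card_compl, card_image_of_injective _ hp, card_eq, card_univ, Fintype.card_fin]
  omega

theorem eq_u_of_adj_leaf {v : RedV c} {l : Fin c} (h : adj v (leaf l)) : v = u := by
  cases v <;> first | rfl | exact h.elim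

theorem eq_u_of_leaf_adj {v : RedV c} {l : Fin c} (h : adj (leaf l) v) : v = u := by
  cases v <;> first | rfl | exact h.elim

theorem exists_mem_Ioo_eq_u {f : ℕ → RedV c} {m : ℕ}
    (hmove : ∀ t < m, f (t + 1) = f t ∨ adj (f t) (f (t + 1)))
    {l l' : Fin c} (h0 : f 0 = leaf l) (hm : f m = leaf l') (hne : l ≠ l') :
    ∃ t ∈ Ioo 0 m, f t = u := by
  induction m generalizing l' with
  | zero => exact absurd (leaf.inj (h0.symm.trans hm)) hne
  | succ m ih =>
    rcases hmove m (by omega) with hstay | hadj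
    · obtain ⟨t, ht, htu⟩ := ih (fun t ht => hmove t (by omega)) (hstay ▸ hm) hne
      rw [mem_Ioo] at ht
      exact ⟨t, mem_Ioo.2 ⟨ht.1, by omega⟩, htu⟩
    · have hu : f m = u := eq_u_of_adj_leaf (hm ▸ hadj)
      have hm0 : m ≠ 0 := by rintro rfl; rw [h0] at hu; cases hu
      exact ⟨m, mem_Ioo.2 ⟨by omega, by omega⟩, hu⟩

structure IsTurn (p q : Fin c → RedV c) : Prop where
  move : ∀ a, q a = p a ∨ adj (p a) (q a)
  no_swap : ∀ a b, a ≠ b → ¬(q a = p b ∧ q b = p a)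

namespace IsTurn

variable {p q : Fin c → RedV c} {x : Fin c} {l : Fin c}

theorem eq_u_of_enter (h : IsTurn p q) (hq : q x = leaf l) (hp : p x ≠ leaf l) : p x = u :=
  eq_u_of_adj_leaf (hq ▸ (h.move x).resolve_left (hq ▸ Ne.symm hp))

theorem leaf_notMem_range_of_enter (h : IsTurn p q) (hqi : Function.Injective q)
    (hq : q x = leaf l) (hp : p x ≠ leaf l) (y : Fin c) : p y ≠ leaf l := by
  intro hy
  have hyx : y ≠ x := by rintro rfl; exact hp hy
  have hqy : q y = p x := by
    rcases h.move y with hstay | hadj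
    · exact absurd (hqi ((hstay.trans hy).trans hq.symm)) hyx
    · rw [hy] at hadj
      rw [eq_u_of_leaf_adj hadj, h.eq_u_of_enter hq hp]
  exact h.no_swap x y hyx.symm ⟨hq.trans hy.symm, hqy⟩

end IsTurn

def Tracks (g : Perm (Fin c)) (p : Fin c → RedV c) : Prop :=
  ∀ a l, p a = leaf l → g a = l

open Classical in
/-- When agent `x` moves from `u` onto leaf `l`, the agent whose home was `l` takes over the
former home of `x`. -/
noncomputable def nextHome (p q : Fin c → RedV c) (g : Perm (Fin c)) : Perm (Fin c) :=
  if h : ∃ e : Fin c × Fin c, p e.1 = u ∧ q e.1 = leaf e.2 then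
    swap (g h.choose.1) h.choose.2 * g
  else g

variable {p q : Fin c → RedV c} {g : Perm (Fin c)}

theorem nextHome_cases (p q : Fin c → RedV c) (g : Perm (Fin c)) :
    (nextHome p q g = g ∧ ∀ x l, p x = u → q x ≠ leaf l) ∨
      ∃ x l, p x = u ∧ q x = leaf l ∧ nextHome p q g = swap (g x) l * g := by
  unfold nextHome
  split_ifs with h
  · exact .inr ⟨_, _, h.choose_spec.1, h.choose_spec.2, rfl⟩
  · exact .inl ⟨rfl, fun x l hx hq => h ⟨(x, l), hx, hq⟩⟩

theorem Tracks.nextHome (h : IsTurn p q) (hpi : Function.Injective p)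
    (hqi : Function.Injective q) (hg : Tracks g p) : Tracks (nextHome p q g) q := by
  intro y ly hy
  rcases nextHome_cases p q g with ⟨heq, hnone⟩ | ⟨x, l, hxu, hxl, heq⟩
  · rw [heq]
    by_contra hne
    have hstay : p y ≠ leaf ly := fun hp => hne (hg y ly hp)
    exact hnone y ly (h.eq_u_of_enter hy hstay) hy
  rw [heq, Perm.mul_apply]
  by_cases hyx : y = x
  · subst hyx
    obtain rfl : ly = l := leaf.inj (hy.symm.trans hxl)
    exact swap_apply_left _ _
  have hpy : p y = leaf ly := by
    by_contra hne
    exact hyx (hpi ((h.eq_u_of_enter hy hne).trans hxu.symm))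
  rw [hg y ly hpy, swap_apply_of_ne_of_ne]
  · exact fun e => hyx (g.injective ((hg y ly hpy).trans e))
  · rintro rfl
    exact hyx (hqi (hy.trans hxl.symm))

theorem exists_eq_w_of_nextHome_ne (h : IsTurn p q) (hpi : Function.Injective p)
    (hqi : Function.Injective q) (hg : Tracks g p) (hne : nextHome p q g ≠ g) :
    ∃ a, p a = w := by
  rcases nextHome_cases p q g with ⟨heq, -⟩ | ⟨x, l, hxu, hxl, heq⟩
  · exact absurd heq hne
  have hgx : g x ≠ l := by
    rintro e
    rw [e, swap_self] at heq
    exact hne heq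
  have hfree : ∀ y, p y ≠ leaf l :=
    h.leaf_notMem_range_of_enter hqi hxl (by rw [hxu]; exact nofun)
  have hfree' : ∀ y, p y ≠ leaf (g x) := by
    intro y hy
    obtain rfl := g.injective (hg y _ hy)
    rw [hxu] at hy
    cases hy
  by_contra! hw
  have hsub : {w, leaf l, leaf (g x)} ⊆ (univ.image p)ᶜ := by
    intro v hv
    simp only [mem_insert, mem_singleton] at hv
    rcases hv with rfl | rfl | rfl <;> simp [hw, hfree, hfree']
  have hthree := card_le_card hsub
  rw [card_compl_image_eq_two hpi, card_eq_three.2 ⟨w, leaf l, leaf (g x), nofun, nofun,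
    fun e => hgx (leaf.inj e).symm, rfl⟩] at hthree
  omega

noncomputable def homes (S : ℕ → Fin c → RedV c) : ℕ → Perm (Fin c)
  | 0 => 1
  | t + 1 => nextHome (S t) (S (t + 1)) (homes S t)

theorem tracks_homes {S : ℕ → Fin c → RedV c} {m : ℕ} (hinj : ∀ t, Function.Injective (S t))
    (hturn : ∀ t < m, IsTurn (S t) (S (t + 1))) (hstart : ∀ a, S 0 a = leaf a) :
    ∀ t ≤ m, Tracks (homes S t) (S t) := by
  intro t
  induction t with
  | zero => exact fun _ a l ha => leaf.inj ((hstart a).symm.trans ha)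
  | succ t ih => exact fun ht => (ih (by omega)).nextHome (hturn t (by omega)) (hinj t) (hinj _)

theorem homes_succ_cases (S : ℕ → Fin c → RedV c) (t : ℕ) :
    homes S (t + 1) = homes S t ∨ ∃ a b, homes S (t + 1) = swap a b * homes S t :=
  (nextHome_cases _ _ _).imp (fun h => h.1) fun ⟨_, _, _, _, h⟩ => ⟨_, _, h⟩

theorem add_one_le_of_derangement {S : ℕ → Fin c → RedV c} {m : ℕ} {σ : Perm (Fin c)}
    (hc : c ≠ 0) (hinj : ∀ t, Function.Injective (S t))
    (hturn : ∀ t < m, IsTurn (S t) (S (t + 1)))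
    (hstart : ∀ a, S 0 a = leaf a) (hend : ∀ a, S m a = leaf (σ a)) (hσ : ∀ a, σ a ≠ a) :
    c + 1 ≤ m := by
  choose F hF hFu using fun a => exists_mem_Ioo_eq_u (f := fun t => S t a)
    (fun t ht => (hturn t ht).move a) (hstart a) (hend a) (hσ a).symm
  have hcard := card_le_card_of_injOn (s := univ) F (fun a _ => hF a)
    fun a _ b _ hab => hinj _ ((hFu a).trans (hab ▸ hFu b).symm)
  rw [card_univ, Fintype.card_fin, Nat.card_Ioo] at hcard
  omega

theorem sub_one_le_card_occupied_w {S : ℕ → Fin c → RedV c} {m : ℕ} {σ : Perm (Fin c)}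
    (hinj : ∀ t, Function.Injective (S t)) (hturn : ∀ t < m, IsTurn (S t) (S (t + 1)))
    (hstart : ∀ a, S 0 a = leaf a) (hend : ∀ a, S m a = leaf (σ a))
    (hσ : ∀ a b, σ.SameCycle a b) :
    c - 1 ≤ #{t ∈ range m | ∃ a, S t a = w} := by
  have htracks := tracks_homes hinj hturn hstart
  have hhomes : homes S m = σ := Equiv.ext fun a => htracks m le_rfl a _ (hend a)
  have hcount := Perm.card_le_card_filter_ne_add_one (N := m) rfl
    (fun t _ => homes_succ_cases S t) (hhomes ▸ hσ)
  calc c - 1 ≤ #{t ∈ range m | homes S (t + 1) ≠ homes S t} := by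
        rw [Fintype.card_fin] at hcount; omega
    _ ≤ #{t ∈ range m | ∃ a, S t a = w} := card_le_card fun t ht => by
        obtain ⟨htm, hne⟩ := mem_filter.1 ht
        have htm' := mem_range.1 htm
        exact mem_filter.2 ⟨htm, exists_eq_w_of_nextHome_ne (hturn t htm') (hinj _) (hinj _)
          (htracks t htm'.le) hne⟩

end RedV

section Clamp

variable {m : ℕ}

theorem Fin.clamp_eq_castSucc {t : ℕ} (ht : t < m) :
    Fin.clamp t m = (⟨t, ht⟩ : Fin m).castSucc :=
  Fin.ext (by simp [Fin.clamp]; omega)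

theorem Fin.clamp_succ_eq_succ {t : ℕ} (ht : t < m) :
    Fin.clamp (t + 1) m = (⟨t, ht⟩ : Fin m).succ :=
  Fin.ext (by simp [Fin.clamp]; omega)

theorem card_filter_range_le_card_clamp (P : Fin (m + 1) → Prop) [DecidablePred P] :
    #{t ∈ range m | P (Fin.clamp t m)} ≤ Nat.card {i // P i} := by
  rw [Nat.card_eq_fintype_card, Fintype.card_subtype]
  refine card_le_card_of_injOn (Fin.clamp · m) (fun t ht => ?_) fun t ht t' ht' h => ?_
  · simpa using (mem_filter.1 ht).2
  · simp only [coe_filter, mem_range, Set.mem_ofPred_eq] at ht ht'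
    simpa [Fin.clamp, ht.1.le, ht'.1.le] using h

end Clamp

/-- In any feasible schedule, a red edge of size c ≥ 2 attached to a leaf u with
tree-neighbor w requires at least c + 1 turns to resolve all its agents (agent `a`
starts on leaf `a` and targets leaf `a+1`, cyclically), and its agents occupy w
during at least c - 1 turns. -/
theorem red_edge_lower_bound
    (c m : ℕ) (hc : 2 ≤ c)
    (s : Fin (m + 1) → Fin c → RedV c)
    (hstart : ∀ a : Fin c, s 0 a = RedV.leaf a)
    (hinj : ∀ i, Function.Injective (s i))
    (hmove : ∀ i : Fin m, ∀ a, s i.succ a = s i.castSucc a ∨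
        RedV.adj (s i.castSucc a) (s i.succ a))
    (hswap : ∀ i : Fin m, ∀ a b, a ≠ b →
        ¬(s i.succ a = s i.castSucc b ∧ s i.succ b = s i.castSucc a))
    (hend : ∀ a : Fin c,
        s (Fin.last m) a = RedV.leaf ⟨(a.val + 1) % c, Nat.mod_lt _ (by omega)⟩) :
    c + 1 ≤ m ∧ c - 1 ≤ Nat.card {i : Fin (m + 1) // ∃ a, s i a = RedV.w} := by
  obtain ⟨n, rfl⟩ : ∃ n, c = n + 2 := ⟨c - 2, by omega⟩
  set S : ℕ → Fin (n + 2) → RedV (n + 2) := fun t => s (Fin.clamp t m)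
  have hturn : ∀ t < m, RedV.IsTurn (S t) (S (t + 1)) := fun t ht => by
    simp only [S, Fin.clamp_eq_castSucc ht, Fin.clamp_succ_eq_succ ht]
    exact ⟨hmove _, hswap _⟩
  have hS0 : ∀ a, S 0 a = RedV.leaf a := by simpa [S, Fin.clamp] using hstart
  have hSm : ∀ a, S m a = RedV.leaf (finRotate (n + 2) a) := fun a => by
    simp only [S, Fin.clamp_eq_last m m le_rfl, hend, finRotate_apply]
    congr
  have hrot : ∀ a, finRotate (n + 2) a ≠ a := fun a =>
    Equiv.Perm.mem_support.1 (support_finRotate ▸ mem_univ a)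
  refine ⟨RedV.add_one_le_of_derangement (by omega) (fun t => hinj _) hturn hS0 hSm hrot, ?_⟩
  calc n + 2 - 1 ≤ #{t ∈ range m | ∃ a, S t a = RedV.w} :=
        RedV.sub_one_le_card_occupied_w (fun t => hinj _) hturn hS0 hSm
          fun a b => isCycle_finRotate.sameCycle (hrot a) (hrot b)
    _ ≤ _ := card_filter_range_le_card_clamp fun i => ∃ a, s i a = RedV.w
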